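/- Let α > N and let Ω ⊂ ℝ^N be a bounded open set with diameter strictly less than e^(1/(N−α)). Under the reflection setup, if Ω_λ has positive Lebesgue measure, then the logarithmic Riesz potential u(x) = ∫_Ω |x−y|^(α−N) log(1/|x−y|) dy satisfies u(x_λ) < u(x) for every x ∈ Σ_λ with x₁ < λ. -/

import Mathlib

/-!
Write `u z = ∫_Ω K ‖z - y‖` with `K s = s ^ β * log (1 / s)` and `β = α - N`. The set
`S = Σ_λ ∪ Σ'_λ ⊆ Ω` is invariant under the reflection, a measure-preserving isometry, so the
integrals of `K ‖x_λ - y‖` and `K ‖x - y‖` over `S` agree. Every `y ∈ Ω \ S` has `y₁ ≥ λ`, hence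
`‖x_λ - y‖ ≤ ‖x - y‖`, strictly if `y₁ > λ`. The diameter bound keeps all distances in
`[0, exp (-1/β))`, where `K = β⁻¹ • negMulLog ∘ (· ^ β)` is strictly increasing. Since `Ω` is open,
its points with `y₁ = λ` lie in the closure of `Σ_λ`, so `Ω_λ ⊆ {y₁ > λ}`, and `0 < |Ω_λ|` makes
the inequality strict.
-/

open MeasureTheory

/-- Reflection of `x` across the hyperplane `{z : z 0 = l}`. -/
noncomputable def reflH {N : ℕ} [NeZero N] (l : ℝ) (x : EuclideanSpace ℝ (Fin N)) :
    EuclideanSpace ℝ (Fin N) :=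
  WithLp.toLp 2 (Function.update x 0 (2 * l - x 0))

/-- `Σ_λ = {x ∈ Ω : x₁ < λ}`. -/
def sigmaL {N : ℕ} [NeZero N] (Ω : Set (EuclideanSpace ℝ (Fin N))) (l : ℝ) :
    Set (EuclideanSpace ℝ (Fin N)) :=
  {x ∈ Ω | x 0 < l}

/-- `Ω_λ = Ω \ closure (Σ_λ ∪ Σ'_λ)`. -/
noncomputable def omegaL {N : ℕ} [NeZero N] (Ω : Set (EuclideanSpace ℝ (Fin N))) (l : ℝ) :
    Set (EuclideanSpace ℝ (Fin N)) :=
  Ω \ closure (sigmaL Ω l ∪ reflH l '' sigmaL Ω l)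

open Real Set Filter Topology

namespace Real

lemma strictMonoOn_negMulLog : StrictMonoOn negMulLog (Icc 0 (exp (-1))) := by
  refine strictMonoOn_of_deriv_pos (convex_Icc _ _) continuous_negMulLog.continuousOn ?_
  intro x hx
  rw [interior_Icc] at hx
  have hlog : log x < -1 := by simpa using log_lt_log hx.1 hx.2
  rw [deriv_negMulLog hx.1.ne']
  linarith

end Real

-- At `s = 0` the junk values `0 ^ β = 0` and `log 0 = 0` give the continuous extension `0`.
noncomputable def logRieszKernel (β s : ℝ) : ℝ := s ^ β * log (1 / s)

section LogRieszKernel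
variable {β : ℝ}

lemma logRieszKernel_eq_negMulLog (hβ : β ≠ 0) {s : ℝ} (hs : 0 ≤ s) :
    logRieszKernel β s = β⁻¹ * negMulLog (s ^ β) := by
  rcases hs.eq_or_lt with rfl | hs
  · simp [logRieszKernel, zero_rpow hβ]
  · rw [logRieszKernel, negMulLog, log_rpow hs, one_div, log_inv]
    field_simp

lemma continuousOn_logRieszKernel (hβ : 0 < β) : ContinuousOn (logRieszKernel β) (Ici 0) := by
  refine ContinuousOn.congr (f := fun s => β⁻¹ * negMulLog (s ^ β)) ?_
    fun s hs => logRieszKernel_eq_negMulLog hβ.ne' hs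
  exact (continuous_const.mul (continuous_negMulLog.comp
    (continuous_id.rpow_const fun _ => Or.inr hβ.le))).continuousOn

lemma strictMonoOn_logRieszKernel (hβ : 0 < β) :
    StrictMonoOn (logRieszKernel β) (Ico 0 (exp (-β⁻¹))) := by
  intro a ha b hb hab
  have hpow : ∀ {s}, s ∈ Ico 0 (exp (-β⁻¹)) → s ^ β ∈ Icc 0 (exp (-1)) := fun {s} hs =>
    ⟨rpow_nonneg hs.1 _, by
      calc s ^ β ≤ exp (-β⁻¹) ^ β := rpow_le_rpow hs.1 hs.2.le hβ.le
        _ = exp (-1) := by rw [← exp_mul, neg_mul, inv_mul_cancel₀ hβ.ne']⟩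
  rw [logRieszKernel_eq_negMulLog hβ.ne' ha.1, logRieszKernel_eq_negMulLog hβ.ne' hb.1]
  exact mul_lt_mul_of_pos_left
    (strictMonoOn_negMulLog (hpow ha) (hpow hb) (rpow_lt_rpow ha.1 hab hβ)) (inv_pos.2 hβ)

lemma integrableOn_logRieszKernel_norm_sub {E : Type*} [NormedAddCommGroup E] [ProperSpace E]
    [MeasurableSpace E] [OpensMeasurableSpace E] {μ : Measure E} [IsFiniteMeasureOnCompacts μ]
    (hβ : 0 < β) {Ω : Set E} (hΩ : Bornology.IsBounded Ω) (z : E) :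
    IntegrableOn (fun y => logRieszKernel β ‖z - y‖) Ω μ :=
  have hcont : Continuous fun y => logRieszKernel β ‖z - y‖ :=
    (continuousOn_logRieszKernel hβ).comp_continuous (by fun_prop) fun _ => norm_nonneg _
  (hcont.continuousOn.integrableOn_compact hΩ.isCompact_closure).mono_set subset_closure

end LogRieszKernel

theorem MeasureTheory.setIntegral_lt_setIntegral_of_le_of_lt_on {X : Type*} [MeasurableSpace X]
    {μ : Measure X} {f g : X → ℝ} {s t : Set X} (hs : MeasurableSet s)
    (hf : IntegrableOn f s μ) (hg : IntegrableOn g s μ) (hle : ∀ y ∈ s, f y ≤ g y)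
    (hts : t ⊆ s) (ht : 0 < μ t) (hlt : ∀ y ∈ t, f y < g y) :
    ∫ y in s, f y ∂μ < ∫ y in s, g y ∂μ := by
  rw [← sub_pos, ← integral_sub hg hf, setIntegral_pos_iff_support_of_nonneg_ae
    ((ae_restrict_iff' hs).2 (ae_of_all _ fun y hy => sub_nonneg.2 (hle y hy))) (hg.sub hf)]
  exact ht.trans_le (measure_mono fun y hy => ⟨(sub_pos.2 (hlt y hy)).ne', hts hy⟩)

theorem IsometryEquiv.measurePreserving_volume {V : Type*} [NormedAddCommGroup V]
    [InnerProductSpace ℝ V] [MeasurableSpace V] [BorelSpace V] [FiniteDimensional ℝ V]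
    (e : V ≃ᵢ V) : MeasurePreserving e := by
  simpa only [InnerProductSpace.euclideanHausdorffMeasure_eq_volume] using
    e.measurePreserving_euclideanHausdorffMeasure (Module.finrank ℝ V)

theorem IsometryEquiv.setIntegral_norm_apply_sub {V E : Type*} [NormedAddCommGroup V]
    [InnerProductSpace ℝ V] [MeasurableSpace V] [BorelSpace V] [FiniteDimensional ℝ V]
    [NormedAddCommGroup E] [NormedSpace ℝ E]
    (e : V ≃ᵢ V) {s : Set V} (hs : e ⁻¹' s = s) (g : ℝ → E) (x : V) :
    ∫ y in s, g ‖e x - y‖ = ∫ y in s, g ‖x - y‖ := by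
  have := e.measurePreserving_volume.setIntegral_preimage_emb
    e.toHomeomorph.measurableEmbedding (fun y => g ‖e x - y‖) s
  simpa only [hs, ← dist_eq_norm, e.dist_eq] using this.symm

lemma EuclideanSpace.norm_add_smul_single_sq {ι : Type*} [Fintype ι] [DecidableEq ι]
    (v : EuclideanSpace ℝ ι) (i : ι) (c : ℝ) :
    ‖v + c • EuclideanSpace.single i 1‖ ^ 2 = ‖v‖ ^ 2 + 2 * c * v i + c ^ 2 := by
  rw [norm_add_sq_real, inner_smul_right, EuclideanSpace.inner_single_right, norm_smul,
    PiLp.norm_single]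
  simp only [one_mul, norm_one, mul_one, Real.norm_eq_abs, sq_abs, conj_trivial]
  ring

section Reflection
variable {N : ℕ} [NeZero N] (l : ℝ)

lemma reflH_eq_add_smul_single (x : EuclideanSpace ℝ (Fin N)) :
    reflH l x = x + (2 * (l - x 0)) • EuclideanSpace.single 0 1 := by
  ext i
  by_cases hi : i = 0
  · subst hi; simp [reflH]; ring
  · simp [reflH, hi]

lemma reflH_involutive : Function.Involutive (reflH (N := N) l) := by
  intro x
  ext i
  by_cases hi : i = 0
  · subst hi; simp [reflH]
  · simp [reflH]

lemma norm_reflH_sub_sq (x y : EuclideanSpace ℝ (Fin N)) :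
    ‖reflH l x - y‖ ^ 2 = ‖x - y‖ ^ 2 - 4 * (l - x 0) * (y 0 - l) := by
  rw [reflH_eq_add_smul_single, add_sub_right_comm, EuclideanSpace.norm_add_smul_single_sq]
  simp only [PiLp.sub_apply]
  ring

lemma isometry_reflH : Isometry (reflH (N := N) l) := by
  refine Isometry.of_dist_eq fun x y => ?_
  have h : reflH l x - reflH l y = (x - y) + (-2 * (x 0 - y 0)) • EuclideanSpace.single 0 1 := by
    rw [reflH_eq_add_smul_single, reflH_eq_add_smul_single]
    module
  rw [dist_eq_norm, dist_eq_norm, ← sq_eq_sq₀ (norm_nonneg _) (norm_nonneg _), h,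
    EuclideanSpace.norm_add_smul_single_sq]
  simp only [PiLp.sub_apply]
  ring

lemma norm_reflH_sub_le {x y : EuclideanSpace ℝ (Fin N)} (hx : x 0 < l) (hy : l ≤ y 0) :
    ‖reflH l x - y‖ ≤ ‖x - y‖ := by
  refine (sq_le_sq₀ (norm_nonneg _) (norm_nonneg _)).1 ?_
  rw [norm_reflH_sub_sq]
  nlinarith

lemma norm_reflH_sub_lt {x y : EuclideanSpace ℝ (Fin N)} (hx : x 0 < l) (hy : l < y 0) :
    ‖reflH l x - y‖ < ‖x - y‖ := by
  refine (sq_lt_sq₀ (norm_nonneg _) (norm_nonneg _)).1 ?_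
  rw [norm_reflH_sub_sq]
  nlinarith

noncomputable def reflHIsometryEquiv : EuclideanSpace ℝ (Fin N) ≃ᵢ EuclideanSpace ℝ (Fin N) :=
  ⟨(reflH_involutive l).toPerm, isometry_reflH l⟩

@[simp]
lemma coe_reflHIsometryEquiv : ⇑(reflHIsometryEquiv (N := N) l) = reflH l := rfl

lemma isOpen_sigmaL {Ω : Set (EuclideanSpace ℝ (Fin N))} (hΩ : IsOpen Ω) :
    IsOpen (sigmaL Ω l) :=
  hΩ.inter (isOpen_lt (f := fun y : EuclideanSpace ℝ (Fin N) => y 0) (by fun_prop)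
    continuous_const)

lemma mem_closure_sigmaL {Ω : Set (EuclideanSpace ℝ (Fin N))} (hΩ : IsOpen Ω)
    {y : EuclideanSpace ℝ (Fin N)} (hy : y ∈ Ω) (hyl : y 0 ≤ l) : y ∈ closure (sigmaL Ω l) := by
  have hlim : Tendsto (fun t : ℝ => y - t • EuclideanSpace.single 0 1) (𝓝[>] 0) (𝓝 y) := by
    have : Continuous fun t : ℝ => y - t • EuclideanSpace.single (0 : Fin N) (1 : ℝ) := by
      fun_prop
    simpa using (this.tendsto 0).mono_left nhdsWithin_le_nhds
  refine mem_closure_of_tendsto hlim ?_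
  filter_upwards [hlim.eventually (hΩ.mem_nhds hy), self_mem_nhdsWithin] with t htΩ ht
  have : (y - t • EuclideanSpace.single (0 : Fin N) (1 : ℝ)) 0 = y 0 - t := by simp
  exact ⟨htΩ, by linarith [mem_Ioi.1 ht]⟩

lemma omegaL_subset_setOf_lt {Ω : Set (EuclideanSpace ℝ (Fin N))} (hΩ : IsOpen Ω) :
    omegaL Ω l ⊆ {y | l < y 0} := by
  rintro y ⟨hyΩ, hy⟩
  exact not_le.1 fun hyl => hy (closure_mono subset_union_left (mem_closure_sigmaL l hΩ hyΩ hyl))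

lemma isOpen_sigmaL_union_image {Ω : Set (EuclideanSpace ℝ (Fin N))} (hΩ : IsOpen Ω) :
    IsOpen (sigmaL Ω l ∪ reflH l '' sigmaL Ω l) :=
  (isOpen_sigmaL l hΩ).union ((reflHIsometryEquiv l).toHomeomorph.isOpenMap _ (isOpen_sigmaL l hΩ))

lemma preimage_sigmaL_union_image (Ω : Set (EuclideanSpace ℝ (Fin N))) :
    reflH l ⁻¹' (sigmaL Ω l ∪ reflH l '' sigmaL Ω l) = sigmaL Ω l ∪ reflH l '' sigmaL Ω l := by
  rw [(reflH_involutive l).image_eq_preimage_symm, preimage_union, ← preimage_comp,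
    (reflH_involutive l).comp_self, preimage_id, union_comm]

end Reflection

lemma logRieszKernel_norm_reflH_sub_le {N : ℕ} [NeZero N] {l β : ℝ} (hβ : 0 < β)
    {x y : EuclideanSpace ℝ (Fin N)} (hx : x 0 < l) (hy : l ≤ y 0) (hxy : ‖x - y‖ < exp (-β⁻¹)) :
    logRieszKernel β ‖reflH l x - y‖ ≤ logRieszKernel β ‖x - y‖ :=
  (strictMonoOn_logRieszKernel hβ).monotoneOn
    ⟨norm_nonneg _, (norm_reflH_sub_le l hx hy).trans_lt hxy⟩ ⟨norm_nonneg _, hxy⟩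
    (norm_reflH_sub_le l hx hy)

lemma logRieszKernel_norm_reflH_sub_lt {N : ℕ} [NeZero N] {l β : ℝ} (hβ : 0 < β)
    {x y : EuclideanSpace ℝ (Fin N)} (hx : x 0 < l) (hy : l < y 0) (hxy : ‖x - y‖ < exp (-β⁻¹)) :
    logRieszKernel β ‖reflH l x - y‖ < logRieszKernel β ‖x - y‖ :=
  strictMonoOn_logRieszKernel hβ
    ⟨norm_nonneg _, (norm_reflH_sub_lt l hx hy).trans hxy⟩ ⟨norm_nonneg _, hxy⟩
    (norm_reflH_sub_lt l hx hy)

/-- For `α > N` and `diam Ω < e^(1/(N−α))`: if `Ω_λ` has positive Lebesgue measure,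
the logarithmic Riesz potential `u(x) = ∫_Ω |x−y|^(α−N) log(1/|x−y|) dy` satisfies
`u(x_λ) < u(x)` for every `x ∈ Σ_λ`. -/
theorem log_riesz_potential_reflection_lt {N : ℕ} [NeZero N]
    (Ω : Set (EuclideanSpace ℝ (Fin N))) (hΩo : IsOpen Ω) (hΩb : Bornology.IsBounded Ω)
    (α : ℝ) (hα : (N : ℝ) < α) (hdiam : Metric.diam Ω < Real.exp (1 / ((N : ℝ) - α)))
    (l : ℝ) (hrefl : reflH l '' sigmaL Ω l ⊆ Ω)
    (hpos : 0 < volume (omegaL Ω l)) :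
    ∀ x ∈ Ω, x 0 < l →
      (∫ y in Ω, ‖reflH l x - y‖ ^ (α - N) * Real.log (1 / ‖reflH l x - y‖))
        < ∫ y in Ω, ‖x - y‖ ^ (α - N) * Real.log (1 / ‖x - y‖) := by
  intro x hx hxl
  have hβ : 0 < α - N := sub_pos.2 hα
  have hR : 1 / ((N : ℝ) - α) = -(α - N)⁻¹ := by rw [one_div, ← neg_sub, inv_neg]
  have hxy : ∀ y ∈ Ω, ‖x - y‖ < exp (-(α - N)⁻¹) := fun y hy =>
    hR ▸ (dist_eq_norm x y ▸ Metric.dist_le_diam_of_mem hΩb hx hy).trans_lt hdiam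
  set S := sigmaL Ω l ∪ reflH l '' sigmaL Ω l
  have hSΩ : S ⊆ Ω := union_subset (fun y hy => hy.1) hrefl
  have hS : MeasurableSet S := (isOpen_sigmaL_union_image l hΩo).measurableSet
  have hsym := (reflHIsometryEquiv l).setIntegral_norm_apply_sub
    (preimage_sigmaL_union_image l Ω) (logRieszKernel (α - N)) x
  rw [coe_reflHIsometryEquiv] at hsym
  have hint := fun z => integrableOn_logRieszKernel_norm_sub (μ := volume) hβ hΩb z
  change ∫ y in Ω, logRieszKernel (α - N) ‖reflH l x - y‖ < ∫ y in Ω, logRieszKernel (α - N) ‖x - y‖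
  suffices ∫ y in Ω \ S, logRieszKernel (α - N) ‖reflH l x - y‖
      < ∫ y in Ω \ S, logRieszKernel (α - N) ‖x - y‖ by
    rw [← integral_inter_add_sdiff hS (hint _), ← integral_inter_add_sdiff hS (hint _),
      inter_eq_right.2 hSΩ, hsym]
    linarith
  refine setIntegral_lt_setIntegral_of_le_of_lt_on (hΩo.measurableSet.diff hS)
    ((hint _).mono_set sdiff_subset) ((hint _).mono_set sdiff_subset) ?_
    (fun y hy => ⟨hy.1, fun hyS => hy.2 (subset_closure hyS)⟩) hpos ?_
  · exact fun y hy => logRieszKernel_norm_reflH_sub_le hβ hxl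
      (not_lt.1 fun hyl => hy.2 (Or.inl ⟨hy.1, hyl⟩)) (hxy y hy.1)
  · exact fun y hy => logRieszKernel_norm_reflH_sub_lt hβ hxl (omegaL_subset_setOf_lt l hΩo hy)
      (hxy y hy.1)
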